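/- Let v ∈ C²([0,∞)) satisfy v(0) ≠ 0, v′(0) = 0, and the ODE v″(r) + (4/r) v′(r) = v(r) − V(r) v(r) + 2 Q(r) ∫₀^r K(r,s) Q(s) v(s) ds for r > 0, where K(r,s) = (8π²/3) s (1 − s³/r³). Then v has no sign change on [0,∞), and for every 0 < δ < 1 there exist constants C > 0 and R > 0 such that |v(r)| ≥ C e^{δ r} for all r ≥ R; in particular ∫₀^∞ v(r)² r⁴ dr = ∞, so v does not give an element of L²_rad(ℝ⁵). -/

import Mathlib

/-!
Let `W = r⁴ (v′Q − vQ′)`. Multiplying the equation of `v` by `Q`, that of `Q` by `v` and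
subtracting cancels the potential and leaves `W′ = 2 r⁴ Q² ∫₀ʳ K Q v` with `K > 0`. The equation
is linear, so take `v(0) > 0`. As long as `v > 0`, `W` increases from `W(0) = 0`, hence
`(v / Q)′ = W / (r⁴ Q²) > 0` and `v / Q` cannot come down to a zero of `v`: `v > 0` everywhere.
Then `W ≥ W(2) > 0` for `r ≥ 2`, and with `Q ≤ A e^{−(1−ε)r}` the mean value theorem on
`[r − 1, r]` gives `v / Q ≳ e^{2(1−ε)r} / r⁴`; multiplying by `Q ≥ B e^{−(1+ε)r}` yields
`v ≳ e^{(1−3ε)r} / r⁴`, which beats `e^{δr}` once `3ε < 1 − δ`.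
-/

open MeasureTheory Real

noncomputable section

/-- The kernel `K(r,s) = (8π²/3) s (1 − s³/r³)` from Newton's theorem in 5d. -/
def Knewton (r s : ℝ) : ℝ := (8 * π ^ 2 / 3) * s * (1 - s ^ 3 / r ^ 3)

open Filter Set Topology

structure IsGroundStateProfile (Q V : ℝ → ℝ) : Prop where
  contDiffOn : ContDiffOn ℝ 2 Q (Ici 0)
  pos : ∀ r, 0 ≤ r → 0 < Q r
  ode : ∀ r, 0 < r → deriv (deriv Q) r + (4 / r) * deriv Q r = Q r - V r * Q r

def IsLinearizedSolution (Q V v : ℝ → ℝ) : Prop :=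
  ∀ r, 0 < r → deriv (deriv v) r + (4 / r) * deriv v r =
    v r - V r * v r + 2 * Q r * ∫ s in (0 : ℝ)..r, Knewton r s * Q s * v s

lemma IsLinearizedSolution.neg {Q V v : ℝ → ℝ} (hv : IsLinearizedSolution Q V v) :
    IsLinearizedSolution Q V (-v) := by
  intro r hr
  simp only [deriv.neg', deriv.fun_neg, Pi.neg_apply, mul_neg, intervalIntegral.integral_neg]
  linarith [hv r hr]

lemma ContDiffAt.hasDerivAt_deriv {𝕜 F : Type*} [NontriviallyNormedField 𝕜]
    [NormedAddCommGroup F] [NormedSpace 𝕜 F] {f : 𝕜 → F} {x : 𝕜} (hf : ContDiffAt 𝕜 2 f x) :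
    HasDerivAt (deriv f) (deriv (deriv f) x) x :=
  ((hf.derivWithin (m := 1) (by norm_num)).differentiableAt (by norm_num)).hasDerivAt

lemma Knewton_pos {r s : ℝ} (hs : 0 < s) (hsr : s < r) : 0 < Knewton r s := by
  have hr : 0 < r := hs.trans hsr
  have : s ^ 3 / r ^ 3 < 1 := (div_lt_one (by positivity)).2 (by gcongr)
  have : 0 < 1 - s ^ 3 / r ^ 3 := by linarith
  unfold Knewton
  positivity

lemma integral_Knewton_mul_pos {Q v : ℝ → ℝ} {r : ℝ} (hr : 0 < r)
    (hQ : ContinuousOn Q (Icc 0 r)) (hv : ContinuousOn v (Icc 0 r))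
    (hQpos : ∀ s ∈ Ioo 0 r, 0 < Q s) (hvpos : ∀ s ∈ Ioo 0 r, 0 < v s) :
    0 < ∫ s in (0 : ℝ)..r, Knewton r s * Q s * v s := by
  have hK : Continuous (Knewton r) := by
    have : r ^ 3 ≠ 0 := by positivity
    unfold Knewton
    fun_prop (disch := assumption)
  refine intervalIntegral.intervalIntegral_pos_of_pos_on ?_ (fun s hs => ?_) hr
  · refine ContinuousOn.intervalIntegrable ?_
    rw [uIcc_of_le hr.le]
    exact (hK.continuousOn.mul hQ).mul hv
  · have := Knewton_pos hs.1 hs.2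
    have := hQpos s hs
    have := hvpos s hs
    positivity

/-- The weight `r⁴` is the radial volume factor of `ℝ⁵`; the one-sided derivatives make this
continuous at `r = 0`. -/
def radialWronskian (Q v : ℝ → ℝ) (r : ℝ) : ℝ :=
  r ^ 4 * (derivWithin v (Ici 0) r * Q r - v r * derivWithin Q (Ici 0) r)

section radialWronskian

variable {Q V v : ℝ → ℝ}

@[simp]
lemma radialWronskian_zero : radialWronskian Q v 0 = 0 := by simp [radialWronskian]

lemma radialWronskian_of_pos {r : ℝ} (hr : 0 < r) :
    radialWronskian Q v r = r ^ 4 * (deriv v r * Q r - v r * deriv Q r) := by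
  simp only [radialWronskian, derivWithin_of_mem_nhds (Ici_mem_nhds hr)]

lemma continuousOn_radialWronskian (hQ : ContDiffOn ℝ 1 Q (Ici 0))
    (hv : ContDiffOn ℝ 1 v (Ici 0)) : ContinuousOn (radialWronskian Q v) (Ici 0) := by
  have hv' := hv.continuousOn_derivWithin (uniqueDiffOn_Ici 0) le_rfl
  have hQ' := hQ.continuousOn_derivWithin (uniqueDiffOn_Ici 0) le_rfl
  exact (continuous_pow 4).continuousOn.mul
    ((hv'.mul hQ.continuousOn).sub (hv.continuousOn.mul hQ'))

lemma hasDerivAt_radialWronskian (hQ : ContDiffOn ℝ 2 Q (Ici 0))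
    (hQode : ∀ r, 0 < r → deriv (deriv Q) r + (4 / r) * deriv Q r = Q r - V r * Q r)
    (hv : ContDiffOn ℝ 2 v (Ici 0)) (hode : IsLinearizedSolution Q V v) {r : ℝ} (hr : 0 < r) :
    HasDerivAt (radialWronskian Q v)
      (2 * r ^ 4 * Q r ^ 2 * ∫ s in (0 : ℝ)..r, Knewton r s * Q s * v s) r := by
  have hQr := hQ.contDiffAt (Ici_mem_nhds hr)
  have hvr := hv.contDiffAt (Ici_mem_nhds hr)
  have hW : radialWronskian Q v =ᶠ[𝓝 r]
      fun x => x ^ 4 * (deriv v x * Q x - v x * deriv Q x) := by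
    filter_upwards [Ioi_mem_nhds hr] with x hx using radialWronskian_of_pos hx
  have hv' := (hvr.differentiableAt (by norm_num)).hasDerivAt
  have hQ' := (hQr.differentiableAt (by norm_num)).hasDerivAt
  refine (((hasDerivAt_pow 4 r).mul ((hvr.hasDerivAt_deriv.mul hQ').sub
    (hv'.mul hQr.hasDerivAt_deriv))).congr_of_eventuallyEq hW).congr_deriv ?_
  have hv'' := hode r hr
  have hQ'' := hQode r hr
  field_simp at hv'' hQ''
  simp only [Pi.sub_apply, Pi.mul_apply]
  linear_combination (r ^ 3 * Q r) * hv'' - (r ^ 3 * v r) * hQ''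

lemma strictMonoOn_radialWronskian (hQ : IsGroundStateProfile Q V)
    (hv : ContDiffOn ℝ 2 v (Ici 0)) (hode : IsLinearizedSolution Q V v) {b : ℝ}
    (hvpos : ∀ s ∈ Ioo 0 b, 0 < v s) : StrictMonoOn (radialWronskian Q v) (Icc 0 b) := by
  refine strictMonoOn_of_deriv_pos (convex_Icc 0 b)
    ((continuousOn_radialWronskian (hQ.contDiffOn.of_le (by norm_num))
      (hv.of_le (by norm_num))).mono Icc_subset_Ici_self) fun r hr => ?_
  rw [interior_Icc] at hr
  obtain ⟨hr0, hrb⟩ := hr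
  rw [(hasDerivAt_radialWronskian hQ.contDiffOn hQ.ode hv hode hr0).deriv]
  have hsub : Icc 0 r ⊆ Ici 0 := Icc_subset_Ici_self
  have hI := integral_Knewton_mul_pos hr0 (hQ.contDiffOn.continuousOn.mono hsub)
    (hv.continuousOn.mono hsub) (fun s hs => hQ.pos s hs.1.le)
    (fun s hs => hvpos s ⟨hs.1, hs.2.trans hrb⟩)
  have := hQ.pos r hr0.le
  exact mul_pos (by positivity) hI

lemma hasDerivAt_div_radialWronskian (hQ : ContDiffOn ℝ 1 Q (Ici 0))
    (hv : ContDiffOn ℝ 1 v (Ici 0)) {r : ℝ} (hr : 0 < r) (hQr : Q r ≠ 0) :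
    HasDerivAt (fun x => v x / Q x) (radialWronskian Q v r / (r ^ 4 * Q r ^ 2)) r := by
  have hQ' := ((hQ.contDiffAt (Ici_mem_nhds hr)).differentiableAt one_ne_zero).hasDerivAt
  have hv' := ((hv.contDiffAt (Ici_mem_nhds hr)).differentiableAt one_ne_zero).hasDerivAt
  refine (hv'.div hQ' hQr).congr_deriv ?_
  rw [radialWronskian_of_pos hr]
  field_simp

lemma strictMonoOn_div (hQ : IsGroundStateProfile Q V) (hv : ContDiffOn ℝ 2 v (Ici 0))
    (hode : IsLinearizedSolution Q V v) {b : ℝ} (hvpos : ∀ s ∈ Ioo 0 b, 0 < v s) :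
    StrictMonoOn (fun x => v x / Q x) (Icc 0 b) := by
  refine strictMonoOn_of_deriv_pos (convex_Icc 0 b)
    ((hv.continuousOn.div hQ.contDiffOn.continuousOn fun x hx => (hQ.pos x hx).ne').mono
      Icc_subset_Ici_self) fun r hr => ?_
  rw [interior_Icc] at hr
  obtain ⟨hr0, hrb⟩ := hr
  have hQr := hQ.pos r hr0.le
  rw [(hasDerivAt_div_radialWronskian (hQ.contDiffOn.of_le (by norm_num))
    (hv.of_le (by norm_num)) hr0 hQr.ne').deriv]
  have hW := strictMonoOn_radialWronskian hQ hv hode hvpos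
    (left_mem_Icc.2 (hr0.le.trans hrb.le)) ⟨hr0.le, hrb.le⟩ hr0
  rw [radialWronskian_zero] at hW
  exact div_pos hW (by positivity)

end radialWronskian

lemma exists_first_nonpos {v : ℝ → ℝ} {z : ℝ} (hz : 0 ≤ z) (hv : ContinuousOn v (Icc 0 z))
    (hv0 : 0 < v 0) (hvz : v z ≤ 0) : ∃ b, 0 < b ∧ v b ≤ 0 ∧ ∀ s ∈ Ico 0 b, 0 < v s := by
  have hS : IsCompact (Icc 0 z ∩ v ⁻¹' Iic 0) := isCompact_Icc.of_isClosed_subset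
    (hv.preimage_isClosed_of_isClosed isClosed_Icc isClosed_Iic) inter_subset_left
  obtain ⟨b, ⟨⟨hb0, hbz⟩, hvb⟩, hleast⟩ := hS.exists_isLeast ⟨z, ⟨hz, le_rfl⟩, hvz⟩
  refine ⟨b, hb0.lt_of_ne ?_, hvb, fun s hs => ?_⟩
  · rintro rfl
    exact (not_le.2 hv0) hvb
  · by_contra! hvs
    exact (not_le.2 hs.2) (hleast ⟨⟨hs.1, hs.2.le.trans hbz⟩, hvs⟩)

theorem IsLinearizedSolution.pos {Q V v : ℝ → ℝ} (hode : IsLinearizedSolution Q V v)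
    (hQ : IsGroundStateProfile Q V) (hv : ContDiffOn ℝ 2 v (Ici 0)) (hv0 : 0 < v 0) :
    ∀ r, 0 ≤ r → 0 < v r := by
  by_contra! ⟨z, hz, hvz⟩
  obtain ⟨b, hb, hvb, hvpos⟩ :=
    exists_first_nonpos hz (hv.continuousOn.mono Icc_subset_Ici_self) hv0 hvz
  have hmono := strictMonoOn_div hQ hv hode (fun s hs => hvpos s (Ioo_subset_Ico_self hs))
    (left_mem_Icc.2 hb.le) (right_mem_Icc.2 hb.le) hb
  have := div_pos hv0 (hQ.pos 0 le_rfl)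
  have := div_nonpos_of_nonpos_of_nonneg hvb (hQ.pos b hb.le).le
  simp only at hmono
  linarith

lemma eventually_exp_le_of_exp_div_pow_le {f : ℝ → ℝ} {c β δ R : ℝ} {k : ℕ} (hc : 0 ≤ c)
    (hδ : δ < β) (hf : ∀ r, R ≤ r → c * exp (β * r) / r ^ k ≤ f r) :
    ∀ᶠ r in atTop, c * exp (δ * r) ≤ f r := by
  filter_upwards [(tendsto_exp_mul_div_rpow_atTop k (β - δ) (sub_pos.2 hδ)).eventually_ge_atTop 1,
    eventually_ge_atTop R, eventually_gt_atTop 0] with r hr hRr hr0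
  rw [rpow_natCast] at hr
  calc c * exp (δ * r) ≤ c * exp (δ * r) * (exp ((β - δ) * r) / r ^ k) :=
        le_mul_of_one_le_right (by positivity) hr
    _ = c * exp (β * r) / r ^ k := by rw [mul_div_assoc', mul_assoc, ← exp_add]; ring_nf
    _ ≤ f r := hf r hRr

lemma IsLinearizedSolution.exists_exp_div_pow_le {Q V v : ℝ → ℝ}
    (hode : IsLinearizedSolution Q V v) (hQ : IsGroundStateProfile Q V)
    (hv : ContDiffOn ℝ 2 v (Ici 0)) (hvpos : ∀ r, 0 ≤ r → 0 < v r) {A B a b : ℝ} (hA : 0 < A)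
    (hB : 0 < B) (ha : 0 ≤ a) (hQle : ∀ r, 0 ≤ r → Q r ≤ A * exp (-a * r))
    (hQge : ∀ r, 0 ≤ r → B * exp (-b * r) ≤ Q r) :
    ∃ c, 0 < c ∧ ∀ r, 3 ≤ r → c * exp ((2 * a - b) * r) / r ^ 4 ≤ v r := by
  have hvIoo : ∀ t s : ℝ, s ∈ Ioo 0 t → 0 < v s := fun _ s hs => hvpos s hs.1.le
  set W₂ := radialWronskian Q v 2
  have hW₂ : 0 < W₂ := by
    simpa using strictMonoOn_radialWronskian hQ hv hode (hvIoo 2)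
      (left_mem_Icc.2 zero_le_two) (right_mem_Icc.2 zero_le_two) two_pos
  refine ⟨W₂ * B * exp (-2 * a) / A ^ 2, by positivity, fun r hr => ?_⟩
  have hr0 : 0 < r := by linarith
  obtain ⟨ξ, ⟨hξ1, hξr⟩, hslope⟩ := exists_hasDerivAt_eq_slope (fun x => v x / Q x)
    (fun x => radialWronskian Q v x / (x ^ 4 * Q x ^ 2)) (sub_one_lt r)
    ((hv.continuousOn.div hQ.contDiffOn.continuousOn fun x hx => (hQ.pos x hx).ne').mono
      fun x hx => le_trans (by linarith) hx.1)
    fun x hx => hasDerivAt_div_radialWronskian (hQ.contDiffOn.of_le (by norm_num))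
      (hv.of_le (by norm_num)) (by linarith [hx.1]) (hQ.pos x (by linarith [hx.1])).ne'
  have hξ0 : 0 < ξ := by linarith
  have hWξ : W₂ ≤ radialWronskian Q v ξ :=
    (strictMonoOn_radialWronskian hQ hv hode (hvIoo ξ) ⟨zero_le_two, by linarith⟩
      (right_mem_Icc.2 hξ0.le) (by linarith)).le
  have hQξ : Q ξ ≤ A * exp (-a * (r - 1)) :=
    (hQle ξ hξ0.le).trans
      (mul_le_mul_of_nonneg_left (exp_le_exp.2 (by nlinarith)) hA.le)
  have hderiv : W₂ / (r ^ 4 * (A * exp (-a * (r - 1))) ^ 2) ≤ v r / Q r := by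
    have := hQ.pos ξ hξ0.le
    calc W₂ / (r ^ 4 * (A * exp (-a * (r - 1))) ^ 2)
        ≤ radialWronskian Q v ξ / (ξ ^ 4 * Q ξ ^ 2) := by gcongr; linarith
      _ = v r / Q r - v (r - 1) / Q (r - 1) := by rw [hslope, sub_sub_cancel, div_one]
      _ ≤ v r / Q r := sub_le_self _ (div_pos (hvpos _ (by linarith)) (hQ.pos _ (by linarith))).le
  have hexp : exp (-2 * a) * exp ((2 * a - b) * r) * exp (-a * (r - 1)) ^ 2 = exp (-b * r) := by
    rw [← exp_add, ← exp_nat_mul, ← exp_add]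
    ring_nf
  have hQr := hQ.pos r hr0.le
  calc W₂ * B * exp (-2 * a) / A ^ 2 * exp ((2 * a - b) * r) / r ^ 4
      = W₂ / (r ^ 4 * (A * exp (-a * (r - 1))) ^ 2) * (B * exp (-b * r)) := by
        rw [← hexp]
        field_simp
    _ ≤ v r / Q r * Q r :=
        mul_le_mul hderiv (hQge r hr0.le) (by positivity) (div_pos (hvpos r hr0.le) hQr).le
    _ = v r := div_mul_cancel₀ _ hQr.ne'

theorem IsLinearizedSolution.eventually_exp_le {Q V v : ℝ → ℝ}
    (hode : IsLinearizedSolution Q V v) (hQ : IsGroundStateProfile Q V)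
    (hv : ContDiffOn ℝ 2 v (Ici 0)) (hvpos : ∀ r, 0 ≤ r → 0 < v r)
    (hQdecay : ∀ ε, 0 < ε → ∃ A, 0 < A ∧ ∃ B, 0 < B ∧ ∀ r, 0 ≤ r →
      B * exp (-(1 + ε) * r) ≤ Q r ∧ Q r ≤ A * exp (-(1 - ε) * r))
    {δ : ℝ} (hδ0 : 0 < δ) (hδ1 : δ < 1) :
    ∃ C, 0 < C ∧ ∀ᶠ r in atTop, C * exp (δ * r) ≤ v r := by
  obtain ⟨A, hA, B, hB, hQAB⟩ := hQdecay ((1 - δ) / 6) (by linarith)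
  obtain ⟨c, hc, hcv⟩ := hode.exists_exp_div_pow_le hQ hv hvpos hA hB (by linarith)
    (fun r hr => (hQAB r hr).2) (fun r hr => (hQAB r hr).1)
  exact ⟨c, hc, eventually_exp_le_of_exp_div_pow_le hc.le (by linarith) hcv⟩

lemma not_integrableOn_Ioi_of_eventually_ge {f : ℝ → ℝ} {c a : ℝ} (hc : 0 < c)
    (hf : ∀ᶠ r in atTop, c ≤ f r) : ¬ IntegrableOn f (Ioi a) := by
  intro hint
  obtain ⟨M, hM⟩ := eventually_atTop.1 hf
  have hconst : IntegrableOn (fun _ => c) (Ioi (max a M)) := by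
    refine (hint.mono_set (Ioi_subset_Ioi (le_max_left a M))).mono' aestronglyMeasurable_const ?_
    filter_upwards [self_mem_ae_restrict measurableSet_Ioi] with r hr
    rw [norm_of_nonneg hc.le]
    exact hM r ((le_max_right a M).trans hr.le)
  simp [integrableOn_const_iff, hc.ne'] at hconst

theorem homogeneous_solutions_grow_general
    (Qr Vr : ℝ → ℝ)
    (hQsmooth : ContDiffOn ℝ 2 Qr (Set.Ici 0))
    (hQpos : ∀ r, 0 ≤ r → 0 < Qr r)
    (hQode : ∀ r, 0 < r →
      deriv (deriv Qr) r + (4 / r) * deriv Qr r = Qr r - Vr r * Qr r)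
    (hQdecay : ∀ ε, 0 < ε → ∃ A, 0 < A ∧ ∃ B, 0 < B ∧ ∀ r, 0 ≤ r →
      B * Real.exp (-(1 + ε) * r) ≤ Qr r ∧ Qr r ≤ A * Real.exp (-(1 - ε) * r))
    (v : ℝ → ℝ)
    (hv : ContDiffOn ℝ 2 v (Set.Ici 0))
    (hv0 : v 0 ≠ 0)
    (hode : ∀ r, 0 < r →
      deriv (deriv v) r + (4 / r) * deriv v r =
        v r - Vr r * v r + 2 * Qr r * ∫ s in (0 : ℝ)..r, Knewton r s * Qr s * v s) :
    ((∀ r, 0 ≤ r → 0 ≤ v r) ∨ (∀ r, 0 ≤ r → v r ≤ 0)) ∧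
    (∀ δ : ℝ, 0 < δ → δ < 1 → ∃ C, 0 < C ∧ ∃ R, 0 < R ∧
      ∀ r, R ≤ r → C * Real.exp (δ * r) ≤ |v r|) ∧
    ¬ IntegrableOn (fun r => (v r) ^ 2 * r ^ 4) (Set.Ioi 0) := by
  have hQ : IsGroundStateProfile Qr Vr := ⟨hQsmooth, hQpos, hQode⟩
  have hsol : IsLinearizedSolution Qr Vr v := hode
  obtain ⟨hsign, hgrowth⟩ : ((∀ r, 0 ≤ r → 0 ≤ v r) ∨ (∀ r, 0 ≤ r → v r ≤ 0)) ∧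
      ∀ δ : ℝ, 0 < δ → δ < 1 → ∃ C, 0 < C ∧ ∀ᶠ r in atTop, C * exp (δ * r) ≤ |v r| := by
    rcases hv0.lt_or_gt with hneg | hv0pos
    · have hpos := hsol.neg.pos hQ hv.neg (neg_pos.2 hneg)
      refine ⟨Or.inr fun r hr => by simpa using (hpos r hr).le, fun δ hδ0 hδ1 => ?_⟩
      obtain ⟨C, hC, hCv⟩ := hsol.neg.eventually_exp_le hQ hv.neg hpos hQdecay hδ0 hδ1
      exact ⟨C, hC, hCv.mono fun r hr => hr.trans (neg_le_abs _)⟩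
    · have hpos := hsol.pos hQ hv hv0pos
      refine ⟨Or.inl fun r hr => (hpos r hr).le, fun δ hδ0 hδ1 => ?_⟩
      obtain ⟨C, hC, hCv⟩ := hsol.eventually_exp_le hQ hv hpos hQdecay hδ0 hδ1
      exact ⟨C, hC, hCv.mono fun r hr => hr.trans (le_abs_self _)⟩
  refine ⟨hsign, fun δ hδ0 hδ1 => ?_, ?_⟩
  · obtain ⟨C, hC, hCv⟩ := hgrowth δ hδ0 hδ1
    obtain ⟨R, hR⟩ := eventually_atTop.1 hCv
    exact ⟨C, hC, max R 1, by positivity, fun r hr => hR r (le_of_max_le_left hr)⟩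
  · obtain ⟨C, hC, hCv⟩ := hgrowth (1 / 2) one_half_pos one_half_lt_one
    refine not_integrableOn_Ioi_of_eventually_ge (pow_pos hC 2) ?_
    filter_upwards [hCv, eventually_ge_atTop 1] with r hr hr1
    calc C ^ 2 ≤ (C * exp (1 / 2 * r)) ^ 2 := by
          gcongr; exact le_mul_of_one_le_right hC.le (one_le_exp (by positivity))
      _ ≤ v r ^ 2 := sq_abs (v r) ▸ pow_le_pow_left₀ (by positivity) hr 2
      _ ≤ v r ^ 2 * r ^ 4 := le_mul_of_one_le_right (sq_nonneg _) (one_le_pow₀ hr1)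

/-- Solutions of the homogeneous linearized radial ODE `𝓛₊ v = 0` with `v(0) ≠ 0`,
`v′(0) = 0` have no sign change and grow exponentially; in particular they are not
in `L²_rad(ℝ⁵)`.  Here `Qr` is the radial profile of the ground state and `Vr` the
radial profile of the convolution `|x|⁻³ ∗ Q²`. -/
theorem homogeneous_solutions_grow
    (Qr Vr : ℝ → ℝ)
    (hQsmooth : ContDiffOn ℝ 2 Qr (Set.Ici 0))
    (hQpos : ∀ r, 0 ≤ r → 0 < Qr r)
    (hQmono : ∀ r s, 0 ≤ r → r ≤ s → Qr s ≤ Qr r)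
    (hQode : ∀ r, 0 < r →
      deriv (deriv Qr) r + (4 / r) * deriv Qr r = Qr r - Vr r * Qr r)
    (hQdecay : ∀ ε, 0 < ε → ∃ A, 0 < A ∧ ∃ B, 0 < B ∧ ∀ r, 0 ≤ r →
      B * Real.exp (-(1 + ε) * r) ≤ Qr r ∧ Qr r ≤ A * Real.exp (-(1 - ε) * r))
    (v : ℝ → ℝ)
    (hv : ContDiffOn ℝ 2 v (Set.Ici 0))
    (hv0 : v 0 ≠ 0)
    (hv0' : derivWithin v (Set.Ici 0) 0 = 0)
    (hode : ∀ r, 0 < r →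
      deriv (deriv v) r + (4 / r) * deriv v r =
        v r - Vr r * v r + 2 * Qr r * ∫ s in (0 : ℝ)..r, Knewton r s * Qr s * v s) :
    ((∀ r, 0 ≤ r → 0 ≤ v r) ∨ (∀ r, 0 ≤ r → v r ≤ 0)) ∧
    (∀ δ : ℝ, 0 < δ → δ < 1 → ∃ C, 0 < C ∧ ∃ R, 0 < R ∧
      ∀ r, R ≤ r → C * Real.exp (δ * r) ≤ |v r|) ∧
    ¬ IntegrableOn (fun r => (v r) ^ 2 * r ^ 4) (Set.Ioi 0) :=
  homogeneous_solutions_grow_general Qr Vr hQsmooth hQpos hQode hQdecay v hv hv0 hode
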